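/- Let ν > 0, l > 0, and A, B ∈ ℝ with A < B, and set H = 2ν(B − A) − l·A·B. If H < 0 and u : ℝ → ℝ is twice continuously differentiable on [0, l], satisfies the stationary Burgers equation ν u''(x) = u(x) u'(x) on [0, l] with u(0) = A and u(l) = B, then there exist k₀ > 0 and x₀ ∈ ℝ with x₀ ∉ [0, l] such that u(x) = −2ν k₀ coth(k₀ (x − x₀)) for all x ∈ [0, l]. -/

import Mathlib

/-!
Since `(2ν u' - u²)' = 2 (ν u'' - u u') = 0` there is a first integral `2ν u' = u² + c`, and
`u'` solves the linear equation `u'' = (u / ν) u'`, so it has constant sign; the mean value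
theorem makes it positive since `A < B`. Thus `u` increases from `A` to `B`, and `H < 0` forces `AB > 0`, so `u` never
vanishes. The mean value theorem for `1 / u`, whose derivative is `-(1 + c / u²) / (2ν)`, gives
`H = l A B c / u(ξ)²`, hence `c = -(2νk)² < 0`. Finally `u² > (2νk)²` because `u' > 0`, and
`log ((u - 2νk) / (u + 2νk))` has constant derivative `2k`, which integrates to the `coth` profile.
-/

noncomputable def Real.coth (x : ℝ) : ℝ := Real.cosh x / Real.sinh x

open Set Real

section Interval

variable {a b : ℝ}

theorem eq_of_hasDerivAt_zero_on_Icc {f : ℝ → ℝ} (hf : ∀ x ∈ Icc a b, HasDerivAt f 0 x) :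
    ∀ x ∈ Icc a b, f x = f a :=
  constant_of_has_deriv_right_zero (fun x hx => (hf x hx).continuousAt.continuousWithinAt)
    fun x hx => (hf x (Ico_subset_Icc_self hx)).hasDerivWithinAt

theorem ContinuousOn.exists_hasDerivAt_on_Icc {g : ℝ → ℝ} (hab : a ≤ b)
    (hg : ContinuousOn g (Icc a b)) : ∃ G : ℝ → ℝ, ∀ x ∈ Icc a b, HasDerivAt G (g x) x := by
  have hext : Continuous fun t => g (projIcc a b hab t) :=
    hg.comp_continuous (continuous_subtype_val.comp continuous_projIcc) fun t => (projIcc a b hab t).2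
  refine ⟨fun x => ∫ t in a..x, g (projIcc a b hab t), fun x hx => ?_⟩
  simpa [projIcc_of_mem hab hx] using (hext.integral_hasStrictDerivAt a x).hasDerivAt

theorem exists_eq_mul_exp_of_hasDerivAt_mul {f g : ℝ → ℝ} (hab : a ≤ b)
    (hf : ∀ x ∈ Icc a b, HasDerivAt f (g x * f x) x) (hg : ContinuousOn g (Icc a b)) :
    ∃ G : ℝ → ℝ, ∀ x ∈ Icc a b, f x = f a * exp (G x) := by
  obtain ⟨G, hG⟩ := hg.exists_hasDerivAt_on_Icc hab
  refine ⟨fun x => G x - G a, fun x hx => ?_⟩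
  have hconst := eq_of_hasDerivAt_zero_on_Icc (f := fun x => f x * exp (-G x))
    (fun x hx => ((hf x hx).mul (hG x hx).neg.exp).congr_deriv (by ring)) x hx
  calc f x = f x * exp (-G x) * exp (G x) := by rw [mul_assoc, ← exp_add]; simp
    _ = f a * exp (G x - G a) := by rw [hconst, sub_eq_add_neg, add_comm, exp_add]; ring

theorem pos_of_hasDerivAt_mul {f g : ℝ → ℝ} (hf : ∀ x ∈ Icc a b, HasDerivAt f (g x * f x) x)
    (hg : ContinuousOn g (Icc a b)) {x₁ : ℝ} (hx₁ : x₁ ∈ Icc a b) (hpos : 0 < f x₁) :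
    ∀ x ∈ Icc a b, 0 < f x := by
  obtain ⟨G, hG⟩ := exists_eq_mul_exp_of_hasDerivAt_mul (hx₁.1.trans hx₁.2) hf hg
  have hfa : 0 < f a := pos_of_mul_pos_left (hG x₁ hx₁ ▸ hpos) (exp_pos _).le
  exact fun x hx => hG x hx ▸ mul_pos hfa (exp_pos _)

theorem ne_zero_of_hasDerivAt_nonneg {f f' : ℝ → ℝ} (hf : ∀ x ∈ Icc a b, HasDerivAt f (f' x) x)
    (hf' : ∀ x ∈ Icc a b, 0 ≤ f' x) (hab : 0 < f a * f b) : ∀ x ∈ Icc a b, f x ≠ 0 := by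
  have hmono : MonotoneOn f (Icc a b) := monotoneOn_of_hasDerivWithinAt_nonneg (convex_Icc a b)
    (HasDerivAt.continuousOn hf) (fun y hy => (hf y (interior_subset hy)).hasDerivWithinAt)
    fun y hy => hf' y (interior_subset hy)
  intro x hx hfx
  have hmem := hmono.mapsTo_Icc hx
  rw [hfx] at hmem
  nlinarith [hmem.1, hmem.2]

end Interval

theorem Real.coth_eq_exp_two_mul {θ : ℝ} (hθ : θ ≠ 0) :
    coth θ = (exp (2 * θ) + 1) / (exp (2 * θ) - 1) := by
  have hE : exp (2 * θ) - 1 ≠ 0 := by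
    rw [sub_ne_zero, Ne, exp_eq_one_iff]; simpa using hθ
  have h2 : exp (2 * θ) = exp θ * exp θ := by rw [← exp_add]; ring_nf
  have hsinh : sinh θ ≠ 0 := sinh_ne_zero.2 hθ
  rw [coth, div_eq_div_iff hsinh hE, cosh_eq, sinh_eq, h2, exp_neg]
  field_simp

theorem eq_neg_mul_coth_of_div_eq_exp {v s θ : ℝ} (hθ : θ ≠ 0) (hvs : v + s ≠ 0)
    (h : (v - s) / (v + s) = exp (2 * θ)) : v = -s * coth θ := by
  have hE : exp (2 * θ) - 1 ≠ 0 := by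
    rw [sub_ne_zero, Ne, exp_eq_one_iff]; simpa using hθ
  rw [div_eq_iff hvs] at h
  rw [coth_eq_exp_two_mul hθ, mul_div_assoc', eq_div_iff hE]
  linear_combination -h

section Burgers

variable {ν a b : ℝ} {u u' u'' : ℝ → ℝ}

theorem burgers_first_integral (hu : ∀ x ∈ Icc a b, HasDerivAt u (u' x) x)
    (hu' : ∀ x ∈ Icc a b, HasDerivAt u' (u'' x) x)
    (hode : ∀ x ∈ Icc a b, ν * u'' x = u x * u' x) :
    ∀ x ∈ Icc a b, 2 * ν * u' x - u x ^ 2 = 2 * ν * u' a - u a ^ 2 :=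
  eq_of_hasDerivAt_zero_on_Icc fun x hx =>
    (((hu' x hx).const_mul (2 * ν)).sub ((hu x hx).pow 2)).congr_deriv <| by
      rw [mul_assoc, hode x hx]; push_cast; ring

theorem burgers_deriv_pos (hν : ν ≠ 0) (hab : a < b) (hu : ∀ x ∈ Icc a b, HasDerivAt u (u' x) x)
    (hu' : ∀ x ∈ Icc a b, HasDerivAt u' (u'' x) x)
    (hode : ∀ x ∈ Icc a b, ν * u'' x = u x * u' x) (hlt : u a < u b) :
    ∀ x ∈ Icc a b, 0 < u' x := by
  obtain ⟨m, hm, hslope⟩ := exists_hasDerivAt_eq_slope u u' hab (HasDerivAt.continuousOn hu)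
    fun x hx => hu x (Ioo_subset_Icc_self hx)
  refine pos_of_hasDerivAt_mul (g := fun x => u x / ν) (fun x hx => (hu' x hx).congr_deriv ?_)
    ((HasDerivAt.continuousOn hu).div_const ν) (Ioo_subset_Icc_self hm) ?_
  · rw [div_mul_eq_mul_div, eq_div_iff hν, mul_comm, hode x hx]
  · rw [hslope]; exact div_pos (sub_pos.2 hlt) (sub_pos.2 hab)

theorem exists_riccati_two_point_identity {c : ℝ} (hab : a < b)
    (hu : ∀ x ∈ Icc a b, HasDerivAt u (u' x) x)
    (hric : ∀ x ∈ Icc a b, 2 * ν * u' x = u x ^ 2 + c) (hne : ∀ x ∈ Icc a b, u x ≠ 0) :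
    ∃ ξ ∈ Ioo a b, 2 * ν * (u b - u a) - (b - a) * u a * u b = (b - a) * u a * u b * c / u ξ ^ 2 := by
  obtain ⟨ξ, hξ, hslope⟩ := exists_hasDerivAt_eq_slope (fun x => (u x)⁻¹)
    (fun x => -u' x / u x ^ 2) hab
    (HasDerivAt.continuousOn fun x hx => (hu x hx).inv (hne x hx))
    fun x hx => (hu x (Ioo_subset_Icc_self hx)).inv (hne x (Ioo_subset_Icc_self hx))
  have hξ' := Ioo_subset_Icc_self hξ
  have ha := hne a (left_mem_Icc.2 hab.le)
  have hb := hne b (right_mem_Icc.2 hab.le)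
  have hξne := hne ξ hξ'
  refine ⟨ξ, hξ, ?_⟩
  have hba : b - a ≠ 0 := sub_ne_zero.2 hab.ne'
  field_simp at hslope ⊢
  linear_combination 2 * ν * hslope + u b * u a * (b - a) * hric ξ hξ'

theorem exists_eq_neg_mul_coth_of_riccati {k : ℝ} (hν : ν ≠ 0) (hk : k ≠ 0)
    (hu : ∀ x ∈ Icc a b, HasDerivAt u (u' x) x)
    (hric : ∀ x ∈ Icc a b, 2 * ν * u' x = u x ^ 2 - (2 * ν * k) ^ 2)
    (hgt : ∀ x ∈ Icc a b, (2 * ν * k) ^ 2 < u x ^ 2) :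
    ∃ x₀ ∉ Icc a b, ∀ x ∈ Icc a b, u x = -2 * ν * k * coth (k * (x - x₀)) := by
  set s := 2 * ν * k with hs
  clear_value s
  have hratio : ∀ x ∈ Icc a b, 0 < (u x - s) / (u x + s) := fun x hx =>
    div_pos_iff.2 (mul_pos_iff.1 (by nlinarith [hgt x hx]))
  have hsum : ∀ x ∈ Icc a b, u x + s ≠ 0 := fun x hx h => by
    simpa [h] using hratio x hx
  have hlog := eq_of_hasDerivAt_zero_on_Icc
    (f := fun x => log ((u x - s) / (u x + s)) - 2 * k * x) fun x hx => by
      refine (((((hu x hx).sub_const s).div ((hu x hx).add_const s) (hsum x hx)).log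
        (hratio x hx).ne').sub ((hasDerivAt_id x).const_mul (2 * k))).congr_deriv ?_
      have hdiff : u x - s ≠ 0 := fun h => by simpa [h] using hratio x hx
      have hsumx := hsum x hx
      simp only [Pi.div_apply]
      field_simp
      linear_combination 2 * k * hric x hx + 2 * u' x * hs
  set x₀ := a - log ((u a - s) / (u a + s)) / (2 * k) with hx₀
  have hexp : ∀ x ∈ Icc a b, (u x - s) / (u x + s) = exp (2 * (k * (x - x₀))) := fun x hx => by
    rw [← exp_log (hratio x hx), hx₀]
    congr 1
    field_simp
    linarith [hlog x hx]
  have hx₀_notMem : x₀ ∉ Icc a b := fun hmem => by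
    have h := hexp x₀ hmem
    rw [sub_self, mul_zero, mul_zero, exp_zero, div_eq_one_iff_eq (hsum x₀ hmem)] at h
    have hs0 : s = 0 := by linarith
    exact mul_ne_zero (mul_ne_zero two_ne_zero hν) hk (hs ▸ hs0)
  refine ⟨x₀, hx₀_notMem, fun x hx => ?_⟩
  have hθ : k * (x - x₀) ≠ 0 := mul_ne_zero hk (sub_ne_zero.2 fun h => hx₀_notMem (h ▸ hx))
  rw [eq_neg_mul_coth_of_div_eq_exp hθ (hsum x hx) (hexp x hx), hs]
  ring

end Burgers

theorem burgers_stationary_dirichlet_Hneg_coth_general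
    (ν l A B H : ℝ) (hν : 0 < ν) (hl : 0 < l) (hAB : A < B)
    (hH : H = 2 * ν * (B - A) - l * A * B) (hHneg : H < 0)
    (u u' u'' : ℝ → ℝ)
    (hder1 : ∀ x ∈ Set.Icc 0 l, HasDerivAt u (u' x) x)
    (hder2 : ∀ x ∈ Set.Icc 0 l, HasDerivAt u' (u'' x) x)
    (hode : ∀ x ∈ Set.Icc 0 l, ν * u'' x = u x * u' x)
    (hbc0 : u 0 = A) (hbcl : u l = B) :
    ∃ k₀ : ℝ, 0 < k₀ ∧ ∃ x₀ : ℝ, x₀ ∉ Set.Icc 0 l ∧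
      ∀ x ∈ Set.Icc 0 l, u x = -2 * ν * k₀ * Real.coth (k₀ * (x - x₀)) := by
  have hAB_pos : 0 < A * B := by nlinarith
  set c := 2 * ν * u' 0 - u 0 ^ 2
  have hric : ∀ x ∈ Icc 0 l, 2 * ν * u' x = u x ^ 2 + c := fun x hx => by
    linarith [burgers_first_integral hder1 hder2 hode x hx]
  have hu'_pos := burgers_deriv_pos hν.ne' hl hder1 hder2 hode (by rwa [hbc0, hbcl])
  have hu_ne := ne_zero_of_hasDerivAt_nonneg hder1 (fun x hx => (hu'_pos x hx).le)
    (by rwa [hbc0, hbcl])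
  obtain ⟨ξ, hξ, hH_eq⟩ := exists_riccati_two_point_identity hl hder1 hric hu_ne
  have hc : c < 0 := by
    by_contra! hc
    rw [hbc0, hbcl, sub_zero] at hH_eq
    have hlAB : 0 ≤ l * A * B := by rw [mul_assoc]; exact mul_nonneg hl.le hAB_pos.le
    have : 0 ≤ l * A * B * c / u ξ ^ 2 := div_nonneg (mul_nonneg hlAB hc) (sq_nonneg _)
    linarith
  set k := √(-c) / (2 * ν)
  have hk : 0 < k := div_pos (sqrt_pos.2 (neg_pos.2 hc)) (by positivity)
  have hs : (2 * ν * k) ^ 2 = -c := by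
    rw [mul_div_cancel₀ _ (by positivity), sq_sqrt (neg_nonneg.2 hc.le)]
  obtain ⟨x₀, hx₀, hu⟩ := exists_eq_neg_mul_coth_of_riccati hν.ne' hk.ne' hder1
    (fun x hx => by rw [hric x hx, hs]; ring)
    fun x hx => by nlinarith [hric x hx, hu'_pos x hx]
  exact ⟨k, hk, x₀, hx₀, hu⟩

/-- When `A < B` and `H = 2ν(B − A) − l·A·B < 0`, any stationary solution of Burgers'
equation on `[0, l]` with `u(0) = A`, `u(l) = B` has the form
`u(x) = −2ν k₀ coth(k₀ (x − x₀))` with `x₀ ∉ [0, l]`. -/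
theorem burgers_stationary_dirichlet_Hneg_coth
    (ν l A B H : ℝ) (hν : 0 < ν) (hl : 0 < l) (hAB : A < B)
    (hH : H = 2 * ν * (B - A) - l * A * B) (hHneg : H < 0)
    (u u' u'' : ℝ → ℝ)
    (hder1 : ∀ x ∈ Set.Icc 0 l, HasDerivAt u (u' x) x)
    (hder2 : ∀ x ∈ Set.Icc 0 l, HasDerivAt u' (u'' x) x)
    (hcont : ContinuousOn u'' (Set.Icc 0 l))
    (hode : ∀ x ∈ Set.Icc 0 l, ν * u'' x = u x * u' x)
    (hbc0 : u 0 = A) (hbcl : u l = B) :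
    ∃ k₀ : ℝ, 0 < k₀ ∧ ∃ x₀ : ℝ, x₀ ∉ Set.Icc 0 l ∧
      ∀ x ∈ Set.Icc 0 l, u x = -2 * ν * k₀ * Real.coth (k₀ * (x - x₀)) :=
  burgers_stationary_dirichlet_Hneg_coth_general ν l A B H hν hl hAB hH hHneg u u' u'' hder1 hder2
    hode hbc0 hbcl
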